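/- Suppose \mathbb{E}[\hat{\tau}(X)Y^0 | T=1] \leq \mathcal{V}^0 and \mathbb{E}[-\hat{\tau}(X)Y^1 | T=0] \leq \mathcal{V}^1, and let u_1 = P(T=1), u_0 = 1 - u_1. Then \mathbb{E}[(\hat{\tau}(X) - \tau_{true}(X))^2] \leq \mathbb{E}[\hat{\tau}(X)^2] + 2(u_0 \mathbb{E}[\hat{\tau}(X)Y^0 | T=0] + u_1 \mathbb{E}[-\hat{\tau}(X)Y^1 | T=1]) + 2(u_0 \mathcal{V}^1 + u_1 \mathcal{V}^0) + \zeta, where \zeta = \mathbb{E}[(\mu_1(X) - \mu_0(X))^2]. -/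

import Mathlib

/-!
By the tower property `E[τ̂(X) Yᵗ] = E[τ̂(X) μₜ(X)]`, so expanding the square gives
`PEHE = E[τ̂²] + 2 E[τ̂ Y⁰] + 2 E[-τ̂ Y¹] + ζ`. Splitting both cross terms over `{T = 1}` and
`{T = 0}` by the law of total expectation leaves the factual terms `E[τ̂ Y⁰ | T = 0]`,
`E[-τ̂ Y¹ | T = 1]` and the counterfactual ones `E[τ̂ Y⁰ | T = 1] ≤ 𝒱⁰`, `E[-τ̂ Y¹ | T = 0] ≤ 𝒱¹`.
-/

open MeasureTheory ProbabilityTheory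

theorem integral_mul_condExp_of_stronglyMeasurable {Ω : Type*} {m m₀ : MeasurableSpace Ω}
    {μ : Measure[m₀] Ω} (hm : m ≤ m₀) [SigmaFinite (μ.trim hm)] {g Y : Ω → ℝ}
    (hg : StronglyMeasurable[m] g) (hgY : Integrable (g * Y) μ) (hY : Integrable Y μ) :
    ∫ ω, g ω * Y ω ∂μ = ∫ ω, g ω * (μ[Y | m]) ω ∂μ := by
  rw [← integral_condExp hm]
  exact integral_congr_ae (condExp_mul_of_stronglyMeasurable_left hg hgY hY)

theorem integral_comp_mul_eq_of_condExp_comap {Ω α : Type*} [MeasurableSpace Ω]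
    {mα : MeasurableSpace α} {μ : Measure Ω} [IsFiniteMeasure μ] {X : Ω → α} {τ ν : α → ℝ}
    {Y : Ω → ℝ} (hX : Measurable X) (hτ : Measurable τ) (hY : Integrable Y μ)
    (hτY : Integrable (fun ω => τ (X ω) * Y ω) μ)
    (hcond : μ[Y | mα.comap X] =ᵐ[μ] fun ω => ν (X ω)) :
    ∫ ω, τ (X ω) * Y ω ∂μ = ∫ ω, τ (X ω) * ν (X ω) ∂μ := by
  have hτX : StronglyMeasurable[mα.comap X] fun ω => τ (X ω) :=
    (hτ.comp (comap_measurable X)).stronglyMeasurable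
  rw [integral_mul_condExp_of_stronglyMeasurable hX.comap_le hτX hτY hY]
  exact integral_congr_ae (hcond.mono fun ω hω => by simp only [hω])

section

variable {Ω : Type*} [MeasurableSpace Ω] {μ : Measure Ω}

theorem measureReal_mul_integral_cond [IsFiniteMeasure μ] (s : Set Ω) (f : Ω → ℝ) :
    μ.real s * ∫ ω, f ω ∂μ[|s] = ∫ ω in s, f ω ∂μ := by
  rcases eq_or_ne (μ s) 0 with hs | hs
  · simp [measureReal_def, hs, Measure.restrict_eq_zero.2 hs]
  · have hs' : μ.real s ≠ 0 := (measureReal_ne_zero_iff (measure_ne_top μ s)).2 hs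
    rw [ProbabilityTheory.cond, integral_smul_measure, smul_eq_mul, ENNReal.toReal_inv,
      ← measureReal_def, ← mul_assoc, mul_inv_cancel₀ hs', one_mul]

theorem measureReal_mul_integral_cond_add_compl [IsFiniteMeasure μ] {s : Set Ω} {f : Ω → ℝ}
    (hs : MeasurableSet s) (hf : Integrable f μ) :
    μ.real s * ∫ ω, f ω ∂μ[|s] + μ.real sᶜ * ∫ ω, f ω ∂μ[|sᶜ] = ∫ ω, f ω ∂μ := by
  rw [measureReal_mul_integral_cond, measureReal_mul_integral_cond, integral_add_compl hs hf]

theorem integral_sq_sub_sub {a b c : Ω → ℝ} (ha : Integrable (fun ω => a ω ^ 2) μ)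
    (hbc : Integrable (fun ω => (b ω - c ω) ^ 2) μ) (hab : Integrable (fun ω => a ω * b ω) μ)
    (hac : Integrable (fun ω => a ω * c ω) μ) :
    ∫ ω, (a ω - (b ω - c ω)) ^ 2 ∂μ
      = ∫ ω, a ω ^ 2 ∂μ - 2 * ∫ ω, a ω * b ω ∂μ + 2 * ∫ ω, a ω * c ω ∂μ
        + ∫ ω, (b ω - c ω) ^ 2 ∂μ := by
  have hexpand : ∀ ω, (a ω - (b ω - c ω)) ^ 2
      = a ω ^ 2 - 2 * (a ω * b ω) + 2 * (a ω * c ω) + (b ω - c ω) ^ 2 := fun ω => by ring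
  simp_rw [hexpand]
  rw [integral_add (by fun_prop) hbc, integral_add (by fun_prop) (by fun_prop),
    integral_sub ha (by fun_prop), integral_const_mul, integral_const_mul]

end

theorem drm_pehe_upper_bound_general {Ω α : Type*} [MeasurableSpace Ω] [mα : MeasurableSpace α]
    (μ : Measure Ω) [IsProbabilityMeasure μ]
    (X : Ω → α) (hX : Measurable X)
    (T : Ω → ℝ) (hT : Measurable T) (hTval : ∀ ω, T ω = 0 ∨ T ω = 1)
    (τ μ1 μ0 : α → ℝ) (hτ : Measurable τ)
    (Y1 Y0 : Ω → ℝ) (hY1 : Integrable Y1 μ) (hY0 : Integrable Y0 μ)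
    (u1 u0 : ℝ) (hu1 : ENNReal.ofReal u1 = μ {ω | T ω = 1}) (hu0 : u0 = 1 - u1)
    (hu1pos : 0 < u1)
    (hτ2 : Integrable (fun ω => (τ (X ω)) ^ 2) μ)
    (hζ : Integrable (fun ω => (μ1 (X ω) - μ0 (X ω)) ^ 2) μ)
    (hτμ1 : Integrable (fun ω => τ (X ω) * μ1 (X ω)) μ)
    (hτμ0 : Integrable (fun ω => τ (X ω) * μ0 (X ω)) μ)
    (hτY1 : Integrable (fun ω => τ (X ω) * Y1 ω) μ)
    (hτY0 : Integrable (fun ω => τ (X ω) * Y0 ω) μ)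
    (hcond1 : μ[Y1 | mα.comap X] =ᵐ[μ] fun ω => μ1 (X ω))
    (hcond0 : μ[Y0 | mα.comap X] =ᵐ[μ] fun ω => μ0 (X ω))
    (V0 V1 : ℝ)
    (hV0 : ∫ ω, τ (X ω) * Y0 ω ∂(μ[|{ω | T ω = 1}]) ≤ V0)
    (hV1 : ∫ ω, -(τ (X ω)) * Y1 ω ∂(μ[|{ω | T ω = 0}]) ≤ V1) :
    ∫ ω, (τ (X ω) - (μ1 (X ω) - μ0 (X ω))) ^ 2 ∂μ
      ≤ ∫ ω, (τ (X ω)) ^ 2 ∂μ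
        + 2 * (u0 * ∫ ω, τ (X ω) * Y0 ω ∂(μ[|{ω | T ω = 0}])
             + u1 * ∫ ω, -(τ (X ω)) * Y1 ω ∂(μ[|{ω | T ω = 1}]))
        + 2 * (u0 * V1 + u1 * V0)
        + ∫ ω, (μ1 (X ω) - μ0 (X ω)) ^ 2 ∂μ := by
  set s : Set Ω := {ω | T ω = 1}
  have hs : MeasurableSet s := hT (measurableSet_singleton 1)
  have hcompl : {ω | T ω = 0} = sᶜ := by
    ext ω
    rcases hTval ω with h | h <;> simp [s, h]
  have hu1s : u1 = μ.real s := by rw [measureReal_def, ← hu1, ENNReal.toReal_ofReal hu1pos.le]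
  have hu0s : u0 = μ.real sᶜ := by rw [hu0, hu1s, probReal_compl_eq_one_sub hs]
  have hnegτY1 : Integrable (fun ω => -τ (X ω) * Y1 ω) μ := by
    simpa only [neg_mul] using hτY1.fun_neg
  have hnegY1 : ∫ ω, τ (X ω) * Y1 ω ∂μ = -∫ ω, -τ (X ω) * Y1 ω ∂μ := by
    simp only [neg_mul, integral_neg, neg_neg]
  rw [hcompl] at hV1 ⊢
  rw [integral_sq_sub_sub hτ2 hζ hτμ1 hτμ0,
    ← integral_comp_mul_eq_of_condExp_comap hX hτ hY1 hτY1 hcond1,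
    ← integral_comp_mul_eq_of_condExp_comap hX hτ hY0 hτY0 hcond0, hnegY1,
    ← measureReal_mul_integral_cond_add_compl hs hτY0,
    ← measureReal_mul_integral_cond_add_compl hs hnegτY1, hu1s, hu0s]
  have hu1V0 := mul_le_mul_of_nonneg_left hV0 (measureReal_nonneg (μ := μ) (s := s))
  have hu0V1 := mul_le_mul_of_nonneg_left hV1 (measureReal_nonneg (μ := μ) (s := sᶜ))
  linarith

/-- Distributionally robust upper bound on the PEHE: if
`E[τ̂(X)Y⁰ | T=1] ≤ 𝒱⁰` and `E[-τ̂(X)Y¹ | T=0] ≤ 𝒱¹`, with `u₁ = P(T=1)`, `u₀ = 1 - u₁`,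
`τ_true = μ₁ - μ₀`, `μₜ(X) = E[Yᵗ | X]`, then
`E[(τ̂(X) - τ_true(X))²] ≤ E[τ̂(X)²] + 2(u₀ E[τ̂(X)Y⁰|T=0] + u₁ E[-τ̂(X)Y¹|T=1])
   + 2(u₀𝒱¹ + u₁𝒱⁰) + ζ` where `ζ = E[(μ₁(X)-μ₀(X))²]`. -/
theorem drm_pehe_upper_bound {Ω α : Type*} [MeasurableSpace Ω] [mα : MeasurableSpace α]
    (μ : Measure Ω) [IsProbabilityMeasure μ]
    (X : Ω → α) (hX : Measurable X)
    (T : Ω → ℝ) (hT : Measurable T) (hTval : ∀ ω, T ω = 0 ∨ T ω = 1)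
    (τ μ1 μ0 : α → ℝ) (hτ : Measurable τ) (hμ1 : Measurable μ1) (hμ0 : Measurable μ0)
    (Y1 Y0 : Ω → ℝ) (hY1 : Integrable Y1 μ) (hY0 : Integrable Y0 μ)
    (u1 u0 : ℝ) (hu1 : ENNReal.ofReal u1 = μ {ω | T ω = 1}) (hu0 : u0 = 1 - u1)
    (hu1pos : 0 < u1) (hu1lt : u1 < 1)
    (hτ2 : Integrable (fun ω => (τ (X ω)) ^ 2) μ)
    (hζ : Integrable (fun ω => (μ1 (X ω) - μ0 (X ω)) ^ 2) μ)
    (hτμ1 : Integrable (fun ω => τ (X ω) * μ1 (X ω)) μ)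
    (hτμ0 : Integrable (fun ω => τ (X ω) * μ0 (X ω)) μ)
    (hτY1 : Integrable (fun ω => τ (X ω) * Y1 ω) μ)
    (hτY0 : Integrable (fun ω => τ (X ω) * Y0 ω) μ)
    (hcond1 : μ[Y1 | mα.comap X] =ᵐ[μ] fun ω => μ1 (X ω))
    (hcond0 : μ[Y0 | mα.comap X] =ᵐ[μ] fun ω => μ0 (X ω))
    (V0 V1 : ℝ)
    (hV0 : ∫ ω, τ (X ω) * Y0 ω ∂(μ[|{ω | T ω = 1}]) ≤ V0)
    (hV1 : ∫ ω, -(τ (X ω)) * Y1 ω ∂(μ[|{ω | T ω = 0}]) ≤ V1) :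
    ∫ ω, (τ (X ω) - (μ1 (X ω) - μ0 (X ω))) ^ 2 ∂μ
      ≤ ∫ ω, (τ (X ω)) ^ 2 ∂μ
        + 2 * (u0 * ∫ ω, τ (X ω) * Y0 ω ∂(μ[|{ω | T ω = 0}])
             + u1 * ∫ ω, -(τ (X ω)) * Y1 ω ∂(μ[|{ω | T ω = 1}]))
        + 2 * (u0 * V1 + u1 * V0)
        + ∫ ω, (μ1 (X ω) - μ0 (X ω)) ^ 2 ∂μ :=
  drm_pehe_upper_bound_general (mα := mα) μ X hX T hT hTval τ μ1 μ0 hτ Y1 Y0 hY1 hY0 u1 u0 hu1 hu0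
    hu1pos hτ2 hζ hτμ1 hτμ0 hτY1 hτY0 hcond1 hcond0 V0 V1 hV0 hV1
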